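/- Let x̄ ∈ S* and q > 0. If the residual mapping R is q-subregular at x̄ for 0 (i.e., there exist ν > 0 and δ > 0 with dist(x, S*) ≤ ν‖R(x)‖^q for all x ∈ B(x̄, δ)), then ∂F is q-subregular at x̄ for 0: there exist κ > 0 and δ′ > 0 such that dist(x, S*) ≤ κ·dist(0, ∂F(x))^q for all x ∈ B(x̄, δ′). -/

import Mathlib

open Set Metric Filter Bornology
open scoped RealInnerProductSpace Topology ENNReal

noncomputable section

/-- Euclidean space `ℝⁿ`. -/
abbrev Eu (n : ℕ) : Type := EuclideanSpace ℝ (Fin n)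

/-- The convex subdifferential of an extended-real-valued function `g` at `x`. -/
def subdiff {n : ℕ} (g : Eu n → EReal) (x : Eu n) : Set (Eu n) :=
  {v | ∀ z : Eu n, g x + ((⟪v, z - x⟫ : ℝ) : EReal) ≤ g z}

/-- `g` is proper: not identically `+∞` and nowhere `-∞`. -/
def ProperFun {n : ℕ} (g : Eu n → EReal) : Prop :=
  (∃ x, g x ≠ ⊤) ∧ ∀ x, g x ≠ ⊥

/-- `g` is convex. -/
def ConvexFun {n : ℕ} (g : Eu n → EReal) : Prop :=
  ∀ x z : Eu n, ∀ a c : ℝ, 0 ≤ a → 0 ≤ c → a + c = 1 →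
    g (a • x + c • z) ≤ (a : EReal) * g x + (c : EReal) * g z

/-- The effective domain of `g`. -/
def domg {n : ℕ} (g : Eu n → EReal) : Set (Eu n) := {x | g x ≠ ⊤}

/-- `prox` is the proximal mapping of `g` (with parameter 1). -/
def IsProxOf {n : ℕ} (g : Eu n → EReal) (prox : Eu n → Eu n) : Prop :=
  ∀ z u : Eu n,
    ((‖prox z - z‖ ^ 2 / 2 : ℝ) : EReal) + g (prox z)
      ≤ ((‖u - z‖ ^ 2 / 2 : ℝ) : EReal) + g u

/-- `f(x) = ψ(Ax - b)`. -/
def fval {n m : ℕ} (ψ : Eu m → ℝ) (A : Eu n →L[ℝ] Eu m) (b : Eu m) (x : Eu n) : ℝ :=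
  ψ (A x - b)

/-- `∇f(x) = Aᵀ ∇ψ(Ax - b)`. -/
def gradfval {n m : ℕ} (gradψ : Eu m → Eu m) (A : Eu n →L[ℝ] Eu m) (b : Eu m)
    (x : Eu n) : Eu n :=
  ContinuousLinearMap.adjoint A (gradψ (A x - b))

/-- `∇²f(x) = Aᵀ ∇²ψ(Ax - b) A`. -/
def hessfval {n m : ℕ} (hessψ : Eu m → (Eu m →L[ℝ] Eu m)) (A : Eu n →L[ℝ] Eu m) (b : Eu m)
    (x : Eu n) : Eu n →L[ℝ] Eu n :=
  (ContinuousLinearMap.adjoint A).comp ((hessψ (A x - b)).comp A)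

/-- `F = f + g`, extended-real-valued. -/
def Fval {n m : ℕ} (ψ : Eu m → ℝ) (A : Eu n →L[ℝ] Eu m) (b : Eu m) (g : Eu n → EReal)
    (x : Eu n) : EReal :=
  ((fval ψ A b x : ℝ) : EReal) + g x

/-- The residual mapping `R(x) = x - prox_g(x - ∇f(x))`. -/
def Rres {n m : ℕ} (gradψ : Eu m → Eu m) (A : Eu n →L[ℝ] Eu m) (b : Eu m)
    (prox : Eu n → Eu n) (x : Eu n) : Eu n :=
  x - prox (x - gradfval gradψ A b x)

/-- The KKT residual `r(x) = ‖R(x)‖`. -/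
def rres {n m : ℕ} (gradψ : Eu m → Eu m) (A : Eu n →L[ℝ] Eu m) (b : Eu m)
    (prox : Eu n → Eu n) (x : Eu n) : ℝ :=
  ‖Rres gradψ A b prox x‖

/-- The subdifferential `∂F(x) = ∇f(x) + ∂g(x)`. -/
def subF {n m : ℕ} (gradψ : Eu m → Eu m) (A : Eu n →L[ℝ] Eu m) (b : Eu m)
    (g : Eu n → EReal) (x : Eu n) : Set (Eu n) :=
  {u | u - gradfval gradψ A b x ∈ subdiff g x}

/-- The stationary point set `S* = {x : 0 ∈ ∂F(x)}`. -/
def SstarSet {n m : ℕ} (gradψ : Eu m → Eu m) (A : Eu n →L[ℝ] Eu m) (b : Eu m)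
    (g : Eu n → EReal) : Set (Eu n) :=
  {x | (0 : Eu n) ∈ subF gradψ A b g x}

/-- Smallest eigenvalue of a (self-adjoint) operator, via the Rayleigh quotient. -/
def lamMin {m : ℕ} (T : Eu m →L[ℝ] Eu m) : ℝ :=
  sInf ((fun v => ⟪T v, v⟫) '' Metric.sphere (0 : Eu m) 1)

/-- The strong stationary point set `X* = {x ∈ S* : ∇²ψ(Ax-b) ⪰ 0}`. -/
def XstarSet {n m : ℕ} (gradψ : Eu m → Eu m) (hessψ : Eu m → (Eu m →L[ℝ] Eu m))
    (A : Eu n →L[ℝ] Eu m) (b : Eu m) (g : Eu n → EReal) : Set (Eu n) :=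
  {x | x ∈ SstarSet gradψ A b g ∧ ∀ v : Eu m, 0 ≤ ⟪hessψ (A x - b) v, v⟫}

/-- `ψ` is twice continuously differentiable on `A(O) - b`, with gradient `gradψ`
and Hessian `hessψ` there. -/
def TwiceDiffOn {n m : ℕ} (ψ : Eu m → ℝ) (gradψ : Eu m → Eu m)
    (hessψ : Eu m → (Eu m →L[ℝ] Eu m)) (A : Eu n →L[ℝ] Eu m) (b : Eu m)
    (O : Set (Eu n)) : Prop :=
  (∀ u ∈ (fun z : Eu n => A z - b) '' O, HasGradientAt ψ (gradψ u) u) ∧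
  (∀ u ∈ (fun z : Eu n => A z - b) '' O, HasFDerivAt gradψ (hessψ u) u) ∧
  ContinuousOn gradψ ((fun z : Eu n => A z - b) '' O) ∧
  ContinuousOn hessψ ((fun z : Eu n => A z - b) '' O)

/-- Assumption 1.1 of the paper, together with the data of the proximal map of `g`. -/
def BasicAssumptions {n m : ℕ} (ψ : Eu m → ℝ) (gradψ : Eu m → Eu m)
    (hessψ : Eu m → (Eu m →L[ℝ] Eu m)) (A : Eu n →L[ℝ] Eu m) (b : Eu m)
    (g : Eu n → EReal) (prox : Eu n → Eu n) (O : Set (Eu n)) : Prop :=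
  IsOpen O ∧ domg g ⊆ O ∧ TwiceDiffOn ψ gradψ hessψ A b O ∧
  ProperFun g ∧ ConvexFun g ∧ LowerSemicontinuous g ∧ ContinuousOn g (domg g) ∧
  IsProxOf g prox ∧
  (∃ c : ℝ, ∀ x, (c : EReal) ≤ Fval ψ A b g x) ∧
  (∀ c : ℝ, Bornology.IsBounded {x | Fval ψ A b g x ≤ (c : EReal)})

/-- The regularized Hessian `G_k = ∇²f(x_k) + a₁ [−λ_min(∇²ψ(Ax_k−b))]₊ AᵀA + μ I`. -/
def GkOf {n m : ℕ} (hessψ : Eu m → (Eu m →L[ℝ] Eu m)) (A : Eu n →L[ℝ] Eu m) (b : Eu m)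
    (a₁ μ : ℝ) (xk : Eu n) : Eu n →L[ℝ] Eu n :=
  hessfval hessψ A b xk
    + (a₁ * max 0 (-(lamMin (hessψ (A xk - b))))) • ((ContinuousLinearMap.adjoint A).comp A)
    + μ • (ContinuousLinearMap.id ℝ (Eu n))

/-- `R_k(y) = y - prox_g(y - ∇f(x_k) - G(y - x_k))`. -/
def RkRes {n m : ℕ} (gradψ : Eu m → Eu m) (A : Eu n →L[ℝ] Eu m) (b : Eu m)
    (prox : Eu n → Eu n) (G : Eu n →L[ℝ] Eu n) (xk yy : Eu n) : Eu n :=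
  yy - prox (yy - gradfval gradψ A b xk - G (yy - xk))

/-- `r_k(y) = ‖R_k(y)‖`. -/
def rkRes {n m : ℕ} (gradψ : Eu m → Eu m) (A : Eu n →L[ℝ] Eu m) (b : Eu m)
    (prox : Eu n → Eu n) (G : Eu n →L[ℝ] Eu n) (xk yy : Eu n) : ℝ :=
  ‖RkRes gradψ A b prox G xk yy‖

/-- The subproblem objective
`Θ_k(x) = f(x_k) + ⟨∇f(x_k), x - x_k⟩ + (1/2)⟨x - x_k, G (x - x_k)⟩ + g(x)`. -/
def ThetaK {n m : ℕ} (ψ : Eu m → ℝ) (gradψ : Eu m → Eu m) (A : Eu n →L[ℝ] Eu m) (b : Eu m)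
    (g : Eu n → EReal) (G : Eu n →L[ℝ] Eu n) (xk x : Eu n) : EReal :=
  ((fval ψ A b xk + ⟪gradfval gradψ A b xk, x - xk⟫
      + ⟪x - xk, G (x - xk)⟫ / 2 : ℝ) : EReal) + g x

/-- The Armijo descent condition `F(x_k) - F(x_k + βᵐ d) ≥ σ βᵐ μ ‖d‖²`. -/
def ArmijoOK {n m : ℕ} (ψ : Eu m → ℝ) (A : Eu n →L[ℝ] Eu m) (b : Eu m) (g : Eu n → EReal)
    (σ β μ : ℝ) (xk dk : Eu n) (M : ℕ) : Prop :=
  Fval ψ A b g (xk + β ^ M • dk) + ((σ * β ^ M * μ * ‖dk‖ ^ 2 : ℝ) : EReal)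
    ≤ Fval ψ A b g xk

/-- `hessψ` is strictly continuous at `u0` relative to `S` with modulus `Lψ`. -/
def StrictContAt {m : ℕ} (hessψ : Eu m → (Eu m →L[ℝ] Eu m)) (S : Set (Eu m)) (u0 : Eu m)
    (Lψ : ℝ) : Prop :=
  0 ≤ Lψ ∧ ∃ δ₀ > (0 : ℝ), ∀ z ∈ Metric.closedBall u0 δ₀ ∩ S,
    ∀ z' ∈ Metric.closedBall u0 δ₀ ∩ S, ‖hessψ z - hessψ z'‖ ≤ Lψ * ‖z - z'‖

/-- The KL property of `F = f + g` at `xbar` (general desingularizing function `φ`). -/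
def KLatGen {n m : ℕ} (ψ : Eu m → ℝ) (gradψ : Eu m → Eu m) (A : Eu n →L[ℝ] Eu m) (b : Eu m)
    (g : Eu n → EReal) (xbar : Eu n) : Prop :=
  ∃ δ > (0 : ℝ), ∃ ϖ : EReal, 0 < ϖ ∧ ∃ φ dφ : ℝ → ℝ,
    φ 0 = 0 ∧
    ContinuousOn φ {t : ℝ | 0 ≤ t ∧ (t : EReal) < ϖ} ∧
    ConcaveOn ℝ {t : ℝ | 0 ≤ t ∧ (t : EReal) < ϖ} φ ∧
    (∀ t : ℝ, 0 < t → (t : EReal) < ϖ → HasDerivAt φ (dφ t) t ∧ 0 < dφ t) ∧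
    ∀ z ∈ Metric.closedBall xbar δ,
      Fval ψ A b g xbar < Fval ψ A b g z → Fval ψ A b g z < Fval ψ A b g xbar + ϖ →
        ∀ v ∈ subF gradψ A b g z,
          1 ≤ dφ ((Fval ψ A b g z - Fval ψ A b g xbar).toReal) * ‖v‖

/-- The KL property of `F = f + g` with exponent `θ` at `xbar`. -/
def KLexpAt {n m : ℕ} (ψ : Eu m → ℝ) (gradψ : Eu m → Eu m) (A : Eu n →L[ℝ] Eu m) (b : Eu m)
    (g : Eu n → EReal) (θ : ℝ) (xbar : Eu n) : Prop :=
  ∃ δ > (0 : ℝ), ∃ ϖ : EReal, 0 < ϖ ∧ ∃ c > (0 : ℝ),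
    ∀ z ∈ Metric.closedBall xbar δ,
      Fval ψ A b g xbar < Fval ψ A b g z → Fval ψ A b g z < Fval ψ A b g xbar + ϖ →
        ∀ v ∈ subF gradψ A b g z,
          1 ≤ c * (1 - θ) * ((Fval ψ A b g z - Fval ψ A b g xbar).toReal) ^ (-θ) * ‖v‖

end

/-!
For `v ∈ ∂F(z)` we have `v - ∇f(z) ∈ ∂g(z)`, while the optimality condition of the proximal
step gives `z - ∇f(z) - Pg(z - ∇f(z)) ∈ ∂g(Pg(z - ∇f(z)))`. Monotonicity of `∂g` applied to
these two subgradients yields `‖R(z)‖² ≤ ⟪v, R(z)⟫`, hence `r(z) ≤ ‖v‖`, i.e.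
`r(z) ≤ dist(0, ∂F(z))`, and the subregularity estimate for `R` transfers to `∂F`.
-/

noncomputable section

variable {n : ℕ} {g : Eu n → EReal} {prox : Eu n → Eu n}

lemma ProperFun.ne_top_of_mem_subdiff (hp : ProperFun g) {x v : Eu n} (hv : v ∈ subdiff g x) :
    g x ≠ ⊤ := by
  obtain ⟨⟨x₀, hx₀⟩, -⟩ := hp
  intro htop
  have := hv x₀
  rw [htop, EReal.top_add_of_ne_bot (EReal.coe_ne_bot _)] at this
  exact hx₀ (top_le_iff.mp this)

lemma ProperFun.subdiff_monotone (hp : ProperFun g) {x y u v : Eu n}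
    (hu : u ∈ subdiff g x) (hv : v ∈ subdiff g y) : 0 ≤ ⟪u - v, x - y⟫ := by
  lift g x to ℝ using ⟨hp.ne_top_of_mem_subdiff hu, hp.2 x⟩ with gx hgx
  lift g y to ℝ using ⟨hp.ne_top_of_mem_subdiff hv, hp.2 y⟩ with gy hgy
  have hxy := hu y
  have hyx := hv x
  rw [← hgx, ← hgy, ← EReal.coe_add, EReal.coe_le_coe_iff] at hxy hyx
  have hswap : ⟪u, y - x⟫ = -⟪u, x - y⟫ := by rw [← inner_neg_right, neg_sub]
  rw [inner_sub_left]
  linarith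

lemma IsProxOf.apply_ne_top (hp : ProperFun g) (hpr : IsProxOf g prox) (s : Eu n) :
    g (prox s) ≠ ⊤ := by
  obtain ⟨⟨x₀, hx₀⟩, -⟩ := hp
  intro htop
  have h := hpr s x₀
  rw [htop, EReal.add_top_of_ne_bot (EReal.coe_ne_bot _), top_le_iff] at h
  exact EReal.add_ne_top (EReal.coe_ne_top _) hx₀ h

/-- Comparing `prox s` with the point `prox s + t • (z - prox s)` of the segment towards `z`. -/
lemma IsProxOf.le_add_mul_of_mem_Ioc (hc : ConvexFun g) (hpr : IsProxOf g prox) {s z : Eu n}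
    {gp gz : ℝ} (hgp : g (prox s) = gp) (hgz : g z = gz) {t : ℝ} (ht : t ∈ Ioc 0 1) :
    gp ≤ ⟪prox s - s, z - prox s⟫ + t * (‖z - prox s‖ ^ 2 / 2) + gz := by
  set p := prox s
  obtain ⟨ht₀, ht₁⟩ := ht
  set u : Eu n := (1 - t) • p + t • z
  have hnorm : ‖u - s‖ ^ 2 = ‖p - s‖ ^ 2 + 2 * t * ⟪p - s, z - p⟫ + t ^ 2 * ‖z - p‖ ^ 2 := by
    have hus : u - s = (p - s) + t • (z - p) := by module
    rw [hus, norm_add_sq_real, real_inner_smul_right, norm_smul, Real.norm_of_nonneg ht₀.le]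
    ring
  have hconv : g u ≤ (((1 - t) * gp + t * gz : ℝ) : EReal) := by
    have := hc p z (1 - t) t (by linarith) ht₀.le (by ring)
    rwa [hgp, hgz, ← EReal.coe_mul, ← EReal.coe_mul, ← EReal.coe_add] at this
  have hprox := (hpr s u).trans (add_le_add_right hconv _)
  rw [hgp, ← EReal.coe_add, ← EReal.coe_add, EReal.coe_le_coe_iff, hnorm] at hprox
  nlinarith

lemma IsProxOf.sub_mem_subdiff (hp : ProperFun g) (hc : ConvexFun g) (hpr : IsProxOf g prox)
    (s : Eu n) : s - prox s ∈ subdiff g (prox s) := by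
  intro z
  rcases eq_or_ne (g z) ⊤ with hz | hz
  · rw [hz]; exact le_top
  lift g (prox s) to ℝ using ⟨hpr.apply_ne_top hp s, hp.2 _⟩ with gp hgp
  lift g z to ℝ using ⟨hz, hp.2 z⟩ with gz hgz
  set p := prox s
  rw [← EReal.coe_add, EReal.coe_le_coe_iff]
  have hlim : Tendsto (fun t : ℝ => ⟪p - s, z - p⟫ + t * (‖z - p‖ ^ 2 / 2) + gz)
      (𝓝[>] 0) (𝓝 (⟪p - s, z - p⟫ + gz)) :=
    (Continuous.tendsto' (by fun_prop) 0 _ (by simp)).mono_left nhdsWithin_le_nhds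
  have hle : gp ≤ ⟪p - s, z - p⟫ + gz := ge_of_tendsto hlim <|
    eventually_of_mem (Ioc_mem_nhdsGT one_pos) fun t ht =>
      hpr.le_add_mul_of_mem_Ioc hc hgp.symm hgz.symm ht
  have hswap : ⟪s - p, z - p⟫ = -⟪p - s, z - p⟫ := by rw [← inner_neg_left, neg_sub]
  linarith

lemma rres_le_norm_of_mem_subF {m : ℕ} {gradψ : Eu m → Eu m} {A : Eu n →L[ℝ] Eu m} {b : Eu m}
    (hp : ProperFun g) (hc : ConvexFun g) (hpr : IsProxOf g prox) {z v : Eu n}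
    (hv : v ∈ subF gradψ A b g z) : rres gradψ A b prox z ≤ ‖v‖ := by
  set w := z - gradfval gradψ A b z
  set p := prox w
  have hmono := hp.subdiff_monotone (hpr.sub_mem_subdiff hp hc w) hv
  have hsub : (w - p) - (v - gradfval gradψ A b z) = (z - p) - v := by
    simp only [w]; abel
  rw [hsub, ← neg_sub z p, inner_neg_right, inner_sub_left, real_inner_self_eq_norm_sq,
    neg_nonneg, sub_nonpos] at hmono
  have hcs := real_inner_le_norm v (z - p)
  change ‖z - p‖ ≤ ‖v‖
  nlinarith [norm_nonneg v, norm_nonneg (z - p)]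

theorem statement2_general {n m : ℕ} (ψ : Eu m → ℝ) (gradψ : Eu m → Eu m)
    (hessψ : Eu m → (Eu m →L[ℝ] Eu m)) (A : Eu n →L[ℝ] Eu m) (b : Eu m)
    (g : Eu n → EReal) (prox : Eu n → Eu n) (O : Set (Eu n))
    (hbasic : BasicAssumptions ψ gradψ hessψ A b g prox O)
    (xbar : Eu n)
    (q : ℝ) (hq : 0 < q)
    (hsub : ∃ ν > (0 : ℝ), ∃ δ > (0 : ℝ), ∀ z ∈ Metric.closedBall xbar δ,
        Metric.infDist z (SstarSet gradψ A b g)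
          ≤ ν * (rres gradψ A b prox z) ^ q) :
    ∃ κ > (0 : ℝ), ∃ δ' > (0 : ℝ), ∀ z ∈ Metric.closedBall xbar δ',
      ∀ v ∈ subF gradψ A b g z,
        Metric.infDist z (SstarSet gradψ A b g) ≤ κ * ‖v‖ ^ q := by
  obtain ⟨ν, hν, δ, hδ, hball⟩ := hsub
  obtain ⟨-, -, -, hp, hc, -, -, hpr, -, -⟩ := hbasic
  refine ⟨ν, hν, δ, hδ, fun z hz v hv => (hball z hz).trans ?_⟩
  exact mul_le_mul_of_nonneg_left
    (Real.rpow_le_rpow (norm_nonneg _) (rres_le_norm_of_mem_subF hp hc hpr hv) hq.le) hν.le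

/-- Lemma 2.1, second part. If the residual mapping `R` is `q`-subregular
at `x̄ ∈ S*` for `0`, then so is `∂F` at `x̄` for `0`. -/
theorem statement2 {n m : ℕ} (ψ : Eu m → ℝ) (gradψ : Eu m → Eu m)
    (hessψ : Eu m → (Eu m →L[ℝ] Eu m)) (A : Eu n →L[ℝ] Eu m) (b : Eu m)
    (g : Eu n → EReal) (prox : Eu n → Eu n) (O : Set (Eu n))
    (hbasic : BasicAssumptions ψ gradψ hessψ A b g prox O)
    (xbar : Eu n) (hxbar : xbar ∈ SstarSet gradψ A b g)
    (q : ℝ) (hq : 0 < q)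
    (hsub : ∃ ν > (0 : ℝ), ∃ δ > (0 : ℝ), ∀ z ∈ Metric.closedBall xbar δ,
        Metric.infDist z (SstarSet gradψ A b g)
          ≤ ν * (rres gradψ A b prox z) ^ q) :
    ∃ κ > (0 : ℝ), ∃ δ' > (0 : ℝ), ∀ z ∈ Metric.closedBall xbar δ',
      ∀ v ∈ subF gradψ A b g z,
        Metric.infDist z (SstarSet gradψ A b g) ≤ κ * ‖v‖ ^ q :=
  statement2_general ψ gradψ hessψ A b g prox O hbasic xbar q hq hsub

end
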